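/- In the quotient algebra A^h_Reg = k[Y^∞]_h/(irregular graphs ∼ 0), the one-loop graph O = |⌒| is nilpotent: O ∗_h O = 0. -/

import Mathlib

/-- Genus-labelled graphs: `one` is the trivial graph `1 = |`, `vee` is grafting `∨`,
and `br` is the bridge operation `⌒` (which creates a loop). -/
inductive G where
  | one : G
  | vee : G → G → G
  | br : G → G → G
deriving DecidableEq

namespace G

/-- The order of a graph: the number of internal vertices of the underlying tree. -/
def order : G → ℕ
  | one => 0
  | vee a b => order a + order b + 1
  | br a b => order a + order b + 1

/-- The genus (loop number) of a graph. -/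
def genus : G → ℕ
  | one => 0
  | vee a b => genus a + genus b
  | br a b => genus a + genus b + 1

/-- The number of free (uncontracted) leaves of a graph. -/
def freeLeaves : G → ℕ
  | one => 1
  | vee a b => freeLeaves a + freeLeaves b
  | br a b => freeLeaves a + freeLeaves b - 2

/-- A graph is regular when every bridge genuinely contracts two free leaves;
irregular graphs are those in which some leaf is involved in more than one loop
contraction. -/
def Regular : G → Prop
  | one => True
  | vee a b => Regular a ∧ Regular b
  | br a b => Regular a ∧ Regular b ∧ 1 ≤ freeLeaves a ∧ 1 ≤ freeLeaves b

end G

/-- The quantized product `∗_h` on basis graphs, with values in the free `k`-module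
`k[Y^∞]_h`: `t ∗_h 1 = 1 ∗_h t = t` and
`(t₁∘t₂) ∗_h (s₁∘'s₂) = ((t₁∘t₂) ∗_h s₁) ∘' s₂ + t₁ ∘ (t₂ ∗_h (s₁∘'s₂))`
for `∘, ∘' ∈ {∨, ⌒}`. -/
noncomputable def G.hstar (k : Type*) [CommRing k] : G → G → (G →₀ k)
  | .one, t => Finsupp.single t 1
  | .vee a b, .one => Finsupp.single (.vee a b) 1
  | .br a b, .one => Finsupp.single (.br a b) 1
  | .vee a b, .vee c d =>
      Finsupp.mapDomain (fun u => G.vee u d) (G.hstar k (.vee a b) c)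
      + Finsupp.mapDomain (fun u => G.vee a u) (G.hstar k b (.vee c d))
  | .vee a b, .br c d =>
      Finsupp.mapDomain (fun u => G.br u d) (G.hstar k (.vee a b) c)
      + Finsupp.mapDomain (fun u => G.vee a u) (G.hstar k b (.br c d))
  | .br a b, .vee c d =>
      Finsupp.mapDomain (fun u => G.vee u d) (G.hstar k (.br a b) c)
      + Finsupp.mapDomain (fun u => G.br a u) (G.hstar k b (.vee c d))
  | .br a b, .br c d =>
      Finsupp.mapDomain (fun u => G.br u d) (G.hstar k (.br a b) c)
      + Finsupp.mapDomain (fun u => G.br a u) (G.hstar k b (.br c d))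
termination_by t s => t.order + s.order
decreasing_by all_goals (simp [G.order]; try omega)

/-- The bilinear extension of `∗_h` to the free `k`-module `k[Y^∞]_h`. -/
noncomputable def G.hstarL (k : Type*) [CommRing k] (x y : G →₀ k) : G →₀ k :=
  x.sum fun t a => y.sum fun s b => (a * b) • G.hstar k t s

/-- The one-loop graph `O = | ⌒ |`. -/
def G.O : G := G.br G.one G.one

/-- The one-vertex tree `T = | ∨ |`. -/
def G.T : G := G.vee G.one G.one

/-- The span of the irregular graphs inside `k[Y^∞]_h`. -/
noncomputable def Irr (k : Type*) [CommRing k] : Submodule k (G →₀ k) :=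
  Submodule.span k {x | ∃ t : G, ¬ G.Regular t ∧ x = Finsupp.single t (1 : k)}

/-! `O ∗_h O = (O ⌒ |) + (| ⌒ O)`, and in both terms the outer bridge contracts a leaf of `O`,
whose two leaves are already contracted; so both terms are irregular. -/

namespace G

theorem freeLeaves_O : O.freeLeaves = 0 := rfl

theorem not_regular_br_of_freeLeaves_left_eq_zero {a : G} (ha : a.freeLeaves = 0) (b : G) :
    ¬ (br a b).Regular := by
  simp [Regular, ha]

theorem not_regular_br_of_freeLeaves_right_eq_zero (a : G) {b : G} (hb : b.freeLeaves = 0) :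
    ¬ (br a b).Regular := by
  simp [Regular, hb]

theorem hstar_O_O (k : Type*) [CommRing k] :
    hstar k O O = Finsupp.single (br O one) 1 + Finsupp.single (br one O) 1 := by
  rw [O, hstar, hstar, hstar]
  simp only [Finsupp.mapDomain_single]

end G

theorem single_mem_Irr {k : Type*} [CommRing k] {t : G} (ht : ¬ t.Regular) :
    Finsupp.single t (1 : k) ∈ Irr k :=
  Submodule.subset_span ⟨t, ht, rfl⟩

theorem stmt15_general (k : Type*) [CommRing k] :
    (Submodule.Quotient.mk (G.hstar k G.O G.O) : (G →₀ k) ⧸ Irr k) = 0 := by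
  rw [Submodule.Quotient.mk_eq_zero, G.hstar_O_O]
  exact Submodule.add_mem _
    (single_mem_Irr (G.not_regular_br_of_freeLeaves_left_eq_zero G.freeLeaves_O _))
    (single_mem_Irr (G.not_regular_br_of_freeLeaves_right_eq_zero _ G.freeLeaves_O))

/-- In the quotient algebra `A^h_Reg = k[Y^∞]_h/(irregular ∼ 0)`, the one-loop graph
`O = |⌒|` is nilpotent: `O ∗_h O = 0`. -/
theorem stmt15 (k : Type*) [CommRing k] [CharZero k] :
    (Submodule.Quotient.mk (G.hstar k G.O G.O) : (G →₀ k) ⧸ Irr k) = 0 :=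
  stmt15_general k
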